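/- arXiv:2602.21842 — 3 statements merged into one kernel-verified Lean document; each statement's English description precedes it below -/
import Mathlib

section
/- In the quotient ring R = 𝔽₂[x₁,…,x_ℓ]/(f_{n−ℓ+1},…,f_n), where f_j is the complete homogeneous symmetric polynomial of degree j, the monomial ∏_{i=1}^ℓ x_i^{n−i} is nonzero. -/
/-!
Write `δ = (n-1, …, n-ℓ)` and let `φ p = ∑_σ sign σ · [x^{δ∘σ}] p`. Then `φ (x^δ) = 1` because the
entries of `δ` are distinct, while `φ` kills `q · h_j` for every `j > n - ℓ`, hence the whole ideal.
Indeed, if `|b| + j = |δ|` then `φ (x^b h_j)` is the determinant of the 0/1 matrix `[b_i ≤ δ_k]`,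
whose `i`-th column is the indicator of an initial segment of length `min (n - b_i) ℓ`. It vanishes
unless these lengths are a permutation of `1, …, ℓ`, and then `b_i ≥ δ_k` for the matching `k`
except in the column of length `ℓ`, so `|b| ≥ |δ| - (n - ℓ)`, i.e. `j ≤ n - ℓ`.
-/

open MvPolynomial Matrix Equiv

theorem Ideal.map_mul_eq_zero_of_mem_span {A M : Type*} [CommSemiring A] [AddCommMonoid M]
    (f : A →+ M) {S : Set A} (hS : ∀ s ∈ S, ∀ q, f (q * s) = 0) {p : A}
    (hp : p ∈ Ideal.span S) (q : A) : f (q * p) = 0 := by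
  induction hp using Submodule.span_induction generalizing q with
  | mem s hs => exact hS s hs q
  | zero => simp
  | add x y _ _ hx hy => rw [mul_add, map_add, hx, hy, add_zero]
  | smul a x _ hx => rw [smul_eq_mul, ← mul_assoc]; exact hx _

theorem Matrix.exists_perm_eq_succ_of_det_ne_zero {R : Type*} [CommRing R] {ℓ : ℕ}
    (s : Fin ℓ → ℕ) (hs : ∀ i, s i ≤ ℓ)
    (h : (of fun k i : Fin ℓ => if k.1 < s i then (1 : R) else 0).det ≠ 0) :
    ∃ e : Perm (Fin ℓ), ∀ i, s i = e i + 1 := by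
  have hpos (i : Fin ℓ) : 0 < s i := by
    by_contra! h0
    exact h (det_eq_zero_of_column_eq_zero i fun k => by simp [Nat.le_zero.mp h0])
  have hinj : s.Injective := fun i i' he => by
    by_contra hne
    exact h (det_zero_of_column_eq hne fun k => by simp [he])
  let f : Fin ℓ → Fin ℓ := fun i => ⟨s i - 1, Nat.sub_one_lt_of_le (hpos i) (hs i)⟩
  have hf : f.Injective := fun i i' he =>
    hinj (Nat.sub_one_cancel (hpos i) (hpos i') (Fin.ext_iff.mp he))
  exact ⟨Equiv.ofBijective f (Finite.injective_iff_bijective.mp hf),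
    fun i => (Nat.sub_one_add_one_eq_of_pos (hpos i)).symm⟩

def staircase (n ℓ : ℕ) (k : Fin ℓ) : ℕ := n - (k + 1)

theorem staircase_injective {n ℓ : ℕ} (hn : ℓ ≤ n) : (staircase n ℓ).Injective :=
  fun i i' h => Fin.ext (by simp only [staircase] at h; omega)

theorem sum_staircase_le_of_det_ne_zero {R : Type*} [CommRing R] {n ℓ : ℕ} (hn : ℓ ≤ n)
    (b : Fin ℓ → ℕ) (h : (of fun k i => if b i ≤ staircase n ℓ k then (1 : R) else 0).det ≠ 0) :
    ∑ k, staircase n ℓ k ≤ ∑ i, b i + (n - ℓ) := by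
  have hentry : (of fun k i => if b i ≤ staircase n ℓ k then (1 : R) else 0) =
      of fun k i => if k.1 < min (n - b i) ℓ then 1 else 0 := by
    ext k i
    have hk := k.2
    exact if_congr (by simp only [staircase, lt_min_iff]; omega) rfl rfl
  obtain ⟨e, he⟩ :=
    exists_perm_eq_succ_of_det_ne_zero _ (fun i => min_le_right _ _) (hentry ▸ h)
  have hlow (k : Fin ℓ) (hk : k.1 + 1 < ℓ) : staircase n ℓ k ≤ b (e.symm k) := by
    have hek := he (e.symm k)
    rw [Equiv.apply_symm_apply] at hek
    simp only [staircase]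
    omega
  rw [← e.symm.sum_comp b]
  obtain _ | m := ℓ
  · simp
  · rw [Fin.sum_univ_castSucc, Fin.sum_univ_castSucc]
    have hinit := Finset.sum_le_sum (s := Finset.univ) fun k _ => hlow (Fin.castSucc k) (by simp)
    have hlast : staircase n (m + 1) (Fin.last m) = n - (m + 1) := by simp [staircase]
    omega

namespace MvPolynomial

theorem prod_map_X_eq_monomial {σ R : Type*} [CommSemiring R] [DecidableEq σ]
    (m : Multiset σ) : (m.map X).prod = monomial (Multiset.toFinsupp m) (1 : R) := by
  induction m using Multiset.induction_on with
  | empty => simp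
  | cons a s ih => simp [ih, X, monomial_mul, ← Multiset.singleton_add]

theorem hsymm_eq_sum_monomial {σ R : Type*} [Fintype σ] [DecidableEq σ]
    [CommSemiring R] (j : ℕ) :
    hsymm σ R j = ∑ s : Sym σ j, monomial (Multiset.toFinsupp (s : Multiset σ)) 1 :=
  Finset.sum_congr rfl fun _ _ => prod_map_X_eq_monomial _

theorem coeff_hsymm {σ R : Type*} [Fintype σ] [DecidableEq σ] [CommSemiring R]
    (d : σ →₀ ℕ) (j : ℕ) : coeff d (hsymm σ R j) = if d.degree = j then 1 else 0 := by
  simp only [hsymm_eq_sum_monomial, coeff_sum, coeff_monomial, Multiset.toFinsupp_eq_iff]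
  split_ifs with h
  · let s₀ : Sym σ j := ⟨_, (Finsupp.card_toMultiset d).trans h⟩
    have key (s : Sym σ j) : (s : Multiset σ) = Finsupp.toMultiset d ↔ s = s₀ := by
      rw [Sym.ext_iff]; rfl
    simp only [key, Finset.sum_ite_eq', Finset.mem_univ, if_true]
  · refine Finset.sum_eq_zero fun s _ => if_neg fun hs => h ?_
    rw [← s.card_coe, hs]
    exact (Finsupp.card_toMultiset d).symm

theorem prod_X_pow_eq_monomial_of_fintype {σ R : Type*} [Fintype σ]
    [CommSemiring R] (d : σ → ℕ) :
    ∏ i, X i ^ d i = monomial (Finsupp.equivFunOnFinite.symm d) (1 : R) := by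
  rw [monomial_eq, C_1, one_mul, Finsupp.prod_fintype _ _ fun _ => pow_zero _]
  rfl

variable {ι R : Type*} [Fintype ι] [DecidableEq ι] [CommRing R]

variable (R) in
noncomputable def antisymmCoeff (δ : ι → ℕ) : MvPolynomial ι R →ₗ[R] R :=
  ∑ σ : Perm ι, ((Perm.sign σ : ℤ) : R) • lcoeff R (Finsupp.equivFunOnFinite.symm (δ ∘ σ))

theorem antisymmCoeff_apply (δ : ι → ℕ) (p : MvPolynomial ι R) :
    antisymmCoeff R δ p =
      ∑ σ : Perm ι, ((Perm.sign σ : ℤ) : R) * coeff (Finsupp.equivFunOnFinite.symm (δ ∘ σ)) p := by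
  simp [antisymmCoeff]

theorem antisymmCoeff_monomial_self {δ : ι → ℕ} (hδ : δ.Injective) (c : R) :
    antisymmCoeff R δ (monomial (Finsupp.equivFunOnFinite.symm δ) c) = c := by
  have key (σ : Perm ι) :
      Finsupp.equivFunOnFinite.symm δ = Finsupp.equivFunOnFinite.symm (δ ∘ σ) ↔ σ = 1 := by
    rw [Equiv.apply_eq_iff_eq, Perm.ext_iff]
    exact ⟨fun h i => hδ (congrFun h i).symm, fun h => by ext i; simp [h]⟩
  simp [antisymmCoeff_apply, coeff_monomial, key]

theorem antisymmCoeff_monomial_mul_hsymm (δ : ι → ℕ) (b : ι →₀ ℕ) (c : R) (j : ℕ) :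
    antisymmCoeff R δ (monomial b c * hsymm ι R j) =
      if b.degree + j = ∑ i, δ i then
        c * (of fun k i => if b i ≤ δ k then (1 : R) else 0).det
      else 0 := by
  have hterm (σ : Perm ι) :
      coeff (Finsupp.equivFunOnFinite.symm (δ ∘ σ)) (monomial b c * hsymm ι R j) =
        if b.degree + j = ∑ i, δ i then c * ∏ i, if b i ≤ δ (σ i) then (1 : R) else 0
        else 0 := by
    set d := Finsupp.equivFunOnFinite.symm (δ ∘ σ)
    have hle : b ≤ d ↔ ∀ i, b i ≤ δ (σ i) := Finsupp.le_def
    rw [coeff_monomial_mul', coeff_hsymm, Finset.prod_boole]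
    by_cases hb : b ≤ d
    · have hdeg : (d - b).degree + b.degree = ∑ i, δ i := by
        rw [← map_add, tsub_add_cancel_of_le hb, Finsupp.degree_eq_sum]
        exact Equiv.sum_comp σ δ
      simp only [if_pos hb, if_pos (hle.mp hb), Finset.mem_univ, forall_const]
      have hj : (d - b).degree = j ↔ b.degree + j = ∑ i, δ i := by omega
      simp only [hj]
      split_ifs <;> simp
    · simp [hb, hle.not.mp hb]
  rw [antisymmCoeff_apply]
  simp only [hterm, det_apply', of_apply]
  split_ifs <;> simp [Finset.mul_sum, mul_left_comm]

theorem antisymmCoeff_staircase_mul_hsymm {n ℓ j : ℕ} (hn : ℓ ≤ n) (hj : n - ℓ + 1 ≤ j)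
    (q : MvPolynomial (Fin ℓ) R) :
    antisymmCoeff R (staircase n ℓ) (q * hsymm (Fin ℓ) R j) = 0 := by
  induction q using MvPolynomial.induction_on' with
  | monomial b c =>
    rw [antisymmCoeff_monomial_mul_hsymm]
    split_ifs with hdeg
    · suffices hdet : (of fun k i => if b i ≤ staircase n ℓ k then (1 : R) else 0).det = 0 by
        rw [hdet, mul_zero]
      by_contra hdet
      have hsum := sum_staircase_le_of_det_ne_zero hn b hdet
      rw [Finsupp.degree_eq_sum] at hdeg
      omega
    · rfl
  | add p q hp hq => rw [add_mul, map_add, hp, hq, add_zero]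

theorem mk_prod_X_pow_staircase_ne_zero [Nontrivial R] {n ℓ : ℕ} (hn : ℓ ≤ n) :
    Ideal.Quotient.mk (Ideal.span (hsymm (Fin ℓ) R '' Set.Icc (n - ℓ + 1) n))
      (∏ i, X i ^ staircase n ℓ i) ≠ 0 := by
  rw [Ne, Ideal.Quotient.eq_zero_iff_mem]
  intro hmem
  have hvanish := Ideal.map_mul_eq_zero_of_mem_span
    (antisymmCoeff R (staircase n ℓ)).toAddMonoidHom
    (by rintro _ ⟨j, hj, rfl⟩ q; exact antisymmCoeff_staircase_mul_hsymm hn hj.1 q) hmem 1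
  rw [LinearMap.toAddMonoidHom_coe, one_mul, prod_X_pow_eq_monomial_of_fintype,
    antisymmCoeff_monomial_self (staircase_injective hn)] at hvanish
  exact one_ne_zero hvanish

end MvPolynomial

theorem top_class_nonzero_general (n ℓ : ℕ) (hn : ℓ ≤ n) :
    Ideal.Quotient.mk
        (Ideal.span ((fun j => hsymm (Fin ℓ) (ZMod 2) j) ''
          (Set.Icc (n - ℓ + 1) n)))
        (∏ i : Fin ℓ, (X i : MvPolynomial (Fin ℓ) (ZMod 2)) ^ (n - (i.1 + 1))) ≠ 0 :=
  mk_prod_X_pow_staircase_ne_zero hn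

/-- In `R = 𝔽₂[x₁,…,x_ℓ]/(f_{n−ℓ+1},…,f_n)`, where `f_j` is the complete homogeneous
symmetric polynomial of degree `j`, the monomial `∏_{i=1}^ℓ x_i^{n−i}` is nonzero.
(Here the variable `x_i`, `1 ≤ i ≤ ℓ`, is indexed by `i - 1 : Fin ℓ`.) -/
theorem top_class_nonzero (n ℓ : ℕ) (hℓ : 1 ≤ ℓ) (hn : ℓ ≤ n) :
    Ideal.Quotient.mk
        (Ideal.span ((fun j => hsymm (Fin ℓ) (ZMod 2) j) ''
          (Set.Icc (n - ℓ + 1) n)))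
        (∏ i : Fin ℓ, (X i : MvPolynomial (Fin ℓ) (ZMod 2)) ^ (n - (i.1 + 1))) ≠ 0 :=
  top_class_nonzero_general n ℓ hn
end

section
/- The complete homogeneous symmetric polynomials f_{n−ℓ+1}, …, f_n in ℓ variables form a regular sequence in the polynomial ring 𝔽₂[x₁,…,x_ℓ] whenever n ≥ ℓ ≥ 1. -/
/-!
Write `R[x₀, x₁, …, x_ℓ] = S[x₀]` with `S = R[x₁, …, x_ℓ]` and let `h_d`, `h'_d` be the complete
homogeneous polynomials in all variables and in `x₁, …, x_ℓ` only. From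
`h_{d+1} = x₀ h_d + h'_{d+1}` one gets `(h_a, …, h_{a+j}) = (h_a) + (h'_{a+1}, …, h'_{a+j})`, where
`h_a` is monic of degree `a` in `x₀`. Reducing modulo `J S[x₀]` and dividing by the monic `h_a`
shows that an element of `S` regular modulo an ideal `J` stays regular modulo `(h_a) + J S[x₀]`,
so induction on the number of variables reduces `h_a, …, h_{a+k}` to `h'_{a+1}, …, h'_{a+k}`.
The quotient is nonzero because each `h_d` with `d ≥ 1` has no constant term.
-/

open MvPolynomial RingTheory.Sequence
open scoped Polynomial

section
variable {A B : Type*} [CommRing A] [CommRing B]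

theorem Ideal.mem_span_singleton_sup_ker_iff {φ : A →+* B} (hφ : Function.Surjective φ)
    {f x : A} : x ∈ Ideal.span {f} ⊔ RingHom.ker φ ↔ φ f ∣ φ x := by
  rw [← Ideal.mem_span_singleton, ← Set.image_singleton, ← Ideal.map_span, ← Ideal.mem_comap,
    Ideal.comap_map_of_surjective φ hφ, RingHom.ker_eq_comap_bot]

theorem Ideal.span_singleton_sup_eq_of_sub_mem {K : Ideal A} {x y : A} (h : x - y ∈ K) :
    Ideal.span {x} ⊔ K = Ideal.span {y} ⊔ K := by
  have key : ∀ {x y : A}, x - y ∈ K → Ideal.span {x} ⊔ K ≤ Ideal.span {y} ⊔ K := fun {x y} h =>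
    sup_le ((Ideal.span_singleton_le_iff_mem _).2 <| by
      simpa using add_mem (Ideal.mem_sup_left (Ideal.mem_span_singleton_self y))
        (Ideal.mem_sup_right h)) le_sup_right
  exact (key h).antisymm (key (by rwa [← neg_mem_iff, neg_sub]))

theorem Ideal.ofList_ofFn (g : ℕ → A) (i : ℕ) :
    Ideal.ofList (List.ofFn fun j : Fin i => g j) = Ideal.span (g '' Set.Iio i) := by
  unfold Ideal.ofList
  congr 1
  ext x
  simp only [Set.mem_ofPred_eq, List.mem_ofFn', Set.mem_range, Set.mem_image, Set.mem_Iio]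
  exact ⟨fun ⟨j, hj⟩ => ⟨j, j.2, hj⟩, fun ⟨j, hj, hx⟩ => ⟨⟨j, hj⟩, hx⟩⟩

theorem RingTheory.Sequence.isWeaklyRegular_ofFn_iff (g : ℕ → A) (k : ℕ) :
    IsWeaklyRegular A (List.ofFn fun j : Fin k => g j) ↔
      ∀ i < k, ∀ x, g i * x ∈ Ideal.span (g '' Set.Iio i) →
        x ∈ Ideal.span (g '' Set.Iio i) := by
  simp only [isWeaklyRegular_iff, List.length_ofFn, List.getElem_ofFn]
  refine forall₂_congr fun i hi => ?_
  have htake : (List.ofFn fun j : Fin k => g j).take i = List.ofFn fun j : Fin i => g j :=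
    (Fin.ofFn_take_eq_take_ofFn hi.le _).symm
  rw [htake, Ideal.ofList_ofFn, Ideal.smul_eq_mul, Ideal.mul_top,
    isSMulRegular_quotient_iff_mem_of_smul_mem]
  rfl

theorem RingEquiv.isWeaklyRegular_ofFn_iff (e : A ≃+* B) (g : ℕ → A) (k : ℕ) :
    IsWeaklyRegular A (List.ofFn fun j : Fin k => g j) ↔
      IsWeaklyRegular B (List.ofFn fun j : Fin k => e (g j)) := by
  rw [e.toAddEquiv.isWeaklyRegular_congr (bs := (List.ofFn fun j : Fin k => g j).map e)
    (List.forall₂_map_right_iff.mpr <| List.forall₂_same.mpr fun r _ x => map_mul e r x),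
    List.map_ofFn]
  rfl

theorem RingTheory.Sequence.top_ne_ofList_smul_top_of_map_eq_zero [Nontrivial B] (φ : A →+* B)
    {rs : List A} (h : ∀ r ∈ rs, φ r = 0) : (⊤ : Submodule A A) ≠ Ideal.ofList rs • ⊤ := by
  rw [Ideal.smul_eq_mul, Ideal.mul_top]
  intro htop
  have hker : Ideal.ofList rs ≤ RingHom.ker φ := Ideal.span_le.2 fun r hr => h r hr
  exact RingHom.ker_ne_top φ (top_le_iff.1 (htop ▸ hker))

end

namespace Polynomial

variable {S : Type*} [CommRing S]

theorem Monic.dvd_of_dvd_smul {f q : S[X]} (hf : f.Monic) {c : S} (hc : IsSMulRegular S c)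
    (h : f ∣ c • q) : f ∣ q := by
  rw [← modByMonic_eq_zero_iff_dvd hf, smul_modByMonic] at h
  rw [← modByMonic_eq_zero_iff_dvd hf]
  exact hc.polynomial.right_eq_zero_of_smul h

theorem mem_span_singleton_sup_map_C_of_C_mul_mem {f q : S[X]} (hf : f.Monic) {J : Ideal S}
    {c : S} (hc : ∀ s, c * s ∈ J → s ∈ J) (h : C c * q ∈ Ideal.span {f} ⊔ J.map C) :
    q ∈ Ideal.span {f} ⊔ J.map C := by
  have hker : J.map C = RingHom.ker (mapRingHom (Ideal.Quotient.mk J)) := by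
    rw [ker_mapRingHom, Ideal.mk_ker]
  have hsurj := map_surjective _ (Ideal.Quotient.mk_surjective (I := J))
  rw [hker, Ideal.mem_span_singleton_sup_ker_iff hsurj] at h ⊢
  refine (hf.map _).dvd_of_dvd_smul (c := Ideal.Quotient.mk J c) ?_ ?_
  · exact (isSMulRegular_quotient_iff_mem_of_smul_mem J c).2 hc
  · rwa [map_mul, coe_mapRingHom, map_C, ← smul_eq_C_mul] at h

theorem span_image_Iio_succ_eq_sup_map_C {g : ℕ → S[X]} {c : ℕ → S}
    (hg : ∀ j, g (j + 1) - C (c j) ∈ Ideal.span (g '' Set.Iio (j + 1))) (j : ℕ) :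
    Ideal.span (g '' Set.Iio (j + 1)) =
      Ideal.span {g 0} ⊔ (Ideal.span (c '' Set.Iio j)).map C := by
  have hIio (n : ℕ) : Set.Iio (n + 1) = insert n (Set.Iio n) := Order.Iio_succ_eq_insert n
  induction j with
  | zero => simp
  | succ j ih =>
    have hg' := hg j
    rw [ih] at hg'
    rw [hIio (j + 1), Set.image_insert_eq, Ideal.span_insert, ih,
      Ideal.span_singleton_sup_eq_of_sub_mem hg', hIio j,
      Set.image_insert_eq, Ideal.span_insert, Ideal.map_sup, Ideal.map_span C {c j},
      Set.image_singleton, sup_left_comm]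

theorem isWeaklyRegular_ofFn_of_monic {g : ℕ → S[X]} {c : ℕ → S} {k : ℕ} (hg₀ : (g 0).Monic)
    (hg : ∀ j, g (j + 1) - C (c j) ∈ Ideal.span (g '' Set.Iio (j + 1)))
    (hc : IsWeaklyRegular S (List.ofFn fun j : Fin k => c j)) :
    IsWeaklyRegular S[X] (List.ofFn fun j : Fin (k + 1) => g j) := by
  rw [isWeaklyRegular_ofFn_iff] at hc ⊢
  rintro (_ | j) hj x hx
  · simpa [hg₀.mul_right_eq_zero_iff] using hx
  · have hCx : C (c j) * x ∈ Ideal.span (g '' Set.Iio (j + 1)) := by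
      simpa [sub_mul] using sub_mem hx (Ideal.mul_mem_right x _ (hg j))
    rw [span_image_Iio_succ_eq_sup_map_C hg] at hCx ⊢
    exact mem_span_singleton_sup_map_C_of_C_mul_mem hg₀ (hc j (by omega)) hCx

end Polynomial

namespace MvPolynomial

variable {σ R : Type*} [Fintype σ] [DecidableEq σ]

theorem optionEquivLeft_hsymm_succ [CommSemiring R] (d : ℕ) :
    optionEquivLeft R σ (hsymm (Option σ) R (d + 1)) =
      Polynomial.X * optionEquivLeft R σ (hsymm (Option σ) R d) +
        Polynomial.C (hsymm σ R (d + 1)) := by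
  simp only [hsymm, map_sum]
  rw [← symOptionSuccEquiv.symm.sum_comp, Fintype.sum_sum_type, Finset.mul_sum]
  congr 1
  · simp [symOptionSuccEquiv, Sym.coe_cons, optionEquivLeft_X_none]
  · simp [symOptionSuccEquiv, map_multiset_prod, Multiset.map_map]

theorem monic_optionEquivLeft_hsymm [CommSemiring R] (d : ℕ) :
    (optionEquivLeft R σ (hsymm (Option σ) R d)).Monic := by
  nontriviality R
  induction d with
  | zero => simp
  | succ d ih =>
    rw [optionEquivLeft_hsymm_succ]
    refine (Polynomial.monic_X.mul ih).add_of_left (Polynomial.degree_C_lt.trans_le ?_)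
    rw [ih.degree_mul, Polynomial.degree_X]
    exact le_add_of_nonneg_right (Polynomial.zero_le_degree_iff.2 ih.ne_zero)

theorem constantCoeff_hsymm_succ [CommSemiring R] (d : ℕ) :
    constantCoeff (hsymm σ R (d + 1)) = 0 := by
  simp [hsymm, map_multiset_prod, Multiset.map_map]

theorem isWeaklyRegular_hsymm_option [CommRing R] {k : ℕ}
    (h : ∀ a, IsWeaklyRegular (MvPolynomial σ R) (List.ofFn fun j : Fin k => hsymm σ R (a + j)))
    (a : ℕ) :
    IsWeaklyRegular (MvPolynomial (Option σ) R)
      (List.ofFn fun j : Fin (k + 1) => hsymm (Option σ) R (a + j)) := by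
  rw [(optionEquivLeft R σ).toRingEquiv.isWeaklyRegular_ofFn_iff
    (fun j => hsymm (Option σ) R (a + j))]
  refine Polynomial.isWeaklyRegular_ofFn_of_monic
    (g := fun j => optionEquivLeft R σ (hsymm (Option σ) R (a + j)))
    (c := fun j => hsymm σ R (a + 1 + j)) (monic_optionEquivLeft_hsymm _) (fun j => ?_) (h (a + 1))
  rw [← add_assoc, optionEquivLeft_hsymm_succ, add_right_comm, add_sub_cancel_right]
  exact Ideal.mul_mem_left _ _ (Ideal.subset_span ⟨j, Set.mem_Iio.2 j.lt_succ_self, rfl⟩)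

theorem isWeaklyRegular_hsymm (R : Type*) [CommRing R] {ℓ k : ℕ} (hk : k ≤ ℓ) (a : ℕ) :
    IsWeaklyRegular (MvPolynomial (Fin ℓ) R)
      (List.ofFn fun j : Fin k => hsymm (Fin ℓ) R (a + j)) := by
  induction ℓ generalizing k a with
  | zero =>
    obtain rfl : k = 0 := by omega
    exact .nil _ _
  | succ ℓ ih =>
    obtain _ | k := k
    · exact .nil _ _
    rw [(renameEquiv R (_root_.finSuccEquiv ℓ)).toRingEquiv.isWeaklyRegular_ofFn_iff
      (fun j => hsymm (Fin (ℓ + 1)) R (a + j))]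
    simp only [AlgEquiv.coe_ringEquiv, renameEquiv_apply, rename_hsymm]
    exact isWeaklyRegular_hsymm_option (ih (by omega)) a

end MvPolynomial

theorem hsymm_regular_sequence_general (n ℓ : ℕ) :
    RingTheory.Sequence.IsRegular (MvPolynomial (Fin ℓ) (ZMod 2))
      (List.ofFn fun j : Fin ℓ => hsymm (Fin ℓ) (ZMod 2) (n - ℓ + 1 + j.1)) := by
  refine ⟨isWeaklyRegular_hsymm (ZMod 2) le_rfl _,
    top_ne_ofList_smul_top_of_map_eq_zero constantCoeff ?_⟩
  simp only [List.mem_ofFn', Set.forall_mem_range, add_right_comm _ 1]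
  exact fun j => constantCoeff_hsymm_succ _

/-- The complete homogeneous symmetric polynomials `f_{n−ℓ+1}, …, f_n` in `ℓ`
variables form a regular sequence in `𝔽₂[x₁,…,x_ℓ]` whenever `n ≥ ℓ ≥ 1`. -/
theorem hsymm_regular_sequence (n ℓ : ℕ) (hℓ : 1 ≤ ℓ) (hn : ℓ ≤ n) :
    RingTheory.Sequence.IsRegular (MvPolynomial (Fin ℓ) (ZMod 2))
      (List.ofFn fun j : Fin ℓ => hsymm (Fin ℓ) (ZMod 2) (n - ℓ + 1 + j.1)) :=
  hsymm_regular_sequence_general n ℓ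
end

section
/- In the quotient ring 𝔽₂[x₁,…,x_ℓ]/(f_{n−ℓ+1},…,f_n), every homogeneous element of degree strictly greater than Σ_{i=1}^ℓ (n−i) = ℓn − ℓ(ℓ+1)/2 is zero. -/
/-!
Write `h_m(S)` for the complete homogeneous polynomial of degree `m` in the variables `x_i`,
`i ∈ S`. Peeling off one variable at a time with `h_{m+1}(S ∪ {i}) = h_{m+1}(S) + x_i h_m(S ∪ {i})`
shows that `h_{n-ℓ+1+k}(x_k, …, x_{ℓ-1})` lies in the ideal `(h_{n-ℓ+1}, …, h_n)`. In the
lexicographic order its leading monomial is `x_k^{n-ℓ+1+k}`, so dividing a homogeneous `p` of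
degree `d` by these polynomials leaves a remainder all of whose monomials have exponents
`t_k ≤ n-ℓ+k`, hence degree at most `∑ (n-ℓ+k) = ℓn - ℓ(ℓ+1)/2 < d`. As the ideal is homogeneous,
`p` is the degree-`d` part of `p - remainder`, which lies in the ideal.
-/

open MvPolynomial Finset

theorem Finset.mem_finsuppAntidiag_iff_degree {σ : Type*} [DecidableEq σ] {s : Finset σ} {m : ℕ}
    {t : σ →₀ ℕ} : t ∈ s.finsuppAntidiag m ↔ t.degree = m ∧ t.support ⊆ s :=
  mem_finsuppAntidiag'

theorem Finsupp.toLex_le_toLex_single_degree {σ : Type*} [LinearOrder σ] {i : σ} {t : σ →₀ ℕ}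
    (ht : ∀ j < i, t j = 0) : toLex t ≤ toLex (Finsupp.single i t.degree) := by
  have hdeg : t.degree = t i + (t.erase i).degree := by
    conv_lhs => rw [← Finsupp.single_add_erase i t]
    rw [map_add, Finsupp.degree_single]
  rcases eq_or_ne (t.erase i) 0 with h | h
  · conv_lhs => rw [← Finsupp.single_add_erase i t, h, add_zero]
    rw [hdeg, h, map_zero, add_zero]
  · refine le_of_lt ⟨i, fun j hj => by simp [ht j hj, hj.ne], ?_⟩
    have := (Finsupp.degree_eq_zero_iff _).not.2 h
    simp only [ofLex_toLex, Finsupp.single_eq_same]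
    omega

theorem sum_range_sub_add (n ℓ : ℕ) (h : ℓ ≤ n) :
    ∑ k ∈ range ℓ, (n - ℓ + k) = ℓ * n - ℓ * (ℓ + 1) / 2 := by
  have gauss := sum_range_id_mul_two ℓ
  rw [sum_add_distrib, sum_const, card_range, smul_eq_mul]
  obtain ⟨e, rfl⟩ := Nat.exists_eq_add_of_le h
  rcases ℓ with _ | k
  · simp
  · simp only [Nat.add_sub_cancel_left, Nat.add_sub_cancel] at gauss ⊢
    have h1 : (k + 1) * (k + 1 + e) = k * k + 2 * k + 1 + k * e + e := by ring
    have h2 : (k + 1) * (k + 1 + 1) = k * k + 3 * k + 2 := by ring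
    have h3 : (k + 1) * e = k * e + e := by ring
    have h4 : (k + 1) * k = k * k + k := by ring
    omega

namespace MvPolynomial

section CompleteHomogeneous

variable {σ R : Type*} [CommSemiring R]

theorem monomial_one_eq_prod_toMultiset_map_X (t : σ →₀ ℕ) :
    monomial t (1 : R) = (t.toMultiset.map X).prod := by
  induction t using Finsupp.induction with
  | zero => simp
  | single_add a b f _ _ ih =>
    rw [Finsupp.toMultiset_add, Multiset.map_add, Multiset.prod_add, ← ih,
      Finsupp.toMultiset_single, Multiset.map_nsmul, Multiset.map_singleton, Multiset.prod_nsmul,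
      Multiset.prod_singleton, X_pow_eq_monomial, monomial_mul, one_mul]

variable [DecidableEq σ]

variable (R) in
noncomputable def hsymmOn (s : Finset σ) (m : ℕ) : MvPolynomial σ R :=
  ∑ t ∈ s.finsuppAntidiag m, monomial t 1

theorem coeff_hsymmOn (s : Finset σ) (m : ℕ) (t : σ →₀ ℕ) :
    coeff t (hsymmOn R s m) = if t.degree = m ∧ t.support ⊆ s then 1 else 0 := by
  simp only [hsymmOn, coeff_sum, coeff_monomial, sum_ite_eq', mem_finsuppAntidiag_iff_degree]

theorem coeff_single_hsymmOn {i : σ} {s : Finset σ} (hi : i ∈ s) (m : ℕ) :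
    coeff (Finsupp.single i m) (hsymmOn R s m) = 1 := by
  rw [coeff_hsymmOn, if_pos ⟨Finsupp.degree_single _ _,
    Finsupp.support_single_subset.trans (singleton_subset_iff.2 hi)⟩]

theorem hsymmOn_zero (s : Finset σ) : hsymmOn R s 0 = 1 := by
  simp [hsymmOn]

theorem isHomogeneous_hsymmOn (s : Finset σ) (m : ℕ) : (hsymmOn R s m).IsHomogeneous m :=
  IsHomogeneous.sum _ _ _ fun _ ht =>
    isHomogeneous_monomial _ (mem_finsuppAntidiag_iff_degree.1 ht).1

theorem hsymmOn_univ [Fintype σ] (m : ℕ) : hsymmOn R univ m = hsymm σ R m := by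
  rw [hsymmOn, hsymm]
  refine sum_bij' (fun t ht => ⟨t.toMultiset, ?_⟩) (fun x _ => Multiset.toFinsupp x.1)
    (fun _ _ => mem_univ _) (fun x _ => ?_) (fun t _ => by simp) (fun x _ => Sym.ext (by simp))
    (fun t _ => monomial_one_eq_prod_toMultiset_map_X t)
  · exact (Finsupp.card_toMultiset t).trans (mem_finsuppAntidiag_iff_degree.1 ht).1
  · refine mem_finsuppAntidiag'.2 ⟨(Finsupp.card_toMultiset _).symm.trans ?_, subset_univ _⟩
    rw [Multiset.toFinsupp_toMultiset]
    exact x.2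

theorem hsymmOn_insert_succ {i : σ} {s : Finset σ} (hi : i ∉ s) (m : ℕ) :
    hsymmOn R (insert i s) (m + 1) = hsymmOn R s (m + 1) + X i * hsymmOn R (insert i s) m := by
  ext t
  rw [coeff_add]
  by_cases hti : t i = 0
  · rw [coeff_X_mul', if_neg (by simpa using hti), add_zero, coeff_hsymmOn, coeff_hsymmOn]
    simp only [subset_insert_iff_of_notMem (show i ∉ t.support by simpa using hti)]
  · obtain ⟨u, rfl⟩ : ∃ u, t = Finsupp.single i 1 + u :=
      ⟨t - Finsupp.single i 1, (add_tsub_cancel_of_le (Finsupp.single_le_iff.2 (by omega))).symm⟩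
    rw [coeff_X_mul, coeff_hsymmOn, coeff_hsymmOn, coeff_hsymmOn, Finsupp.support_add_eq_union,
      Finsupp.support_single _ one_ne_zero]
    simp [hi, insert_subset_iff, add_comm 1]

end CompleteHomogeneous

section Span

variable {σ R : Type*} [CommRing R] [DecidableEq σ]

theorem hsymmOn_mem_span_hsymmOn_union {s u : Finset σ} (hsu : Disjoint s u) (m : ℕ) :
    hsymmOn R s m ∈ Ideal.span (hsymmOn R (s ∪ u) '' Set.Icc (m - #u) m) := by
  induction u using Finset.induction_on generalizing s m with
  | empty =>
    rw [union_empty]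
    exact Ideal.subset_span ⟨m, by simp, rfl⟩
  | insert i u hiu ih =>
    have his : i ∉ s := disjoint_left.1 hsu.symm (mem_insert_self i u)
    have hdisj : Disjoint (insert i s) u :=
      disjoint_insert_left.2 ⟨hiu, (disjoint_insert_right.1 hsu).2⟩
    rw [union_insert, ← insert_union]
    rcases m with _ | m
    · rw [hsymmOn_zero, ← hsymmOn_zero (insert i s ∪ u)]
      exact Ideal.subset_span ⟨0, by simp, rfl⟩
    · have hrec : hsymmOn R s (m + 1) =
          hsymmOn R (insert i s) (m + 1) - X i * hsymmOn R (insert i s) m := by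
        rw [hsymmOn_insert_succ his]; ring
      rw [hrec, card_insert_of_notMem hiu]
      refine sub_mem (Ideal.span_mono ?_ (ih hdisj (m + 1)))
        (Ideal.mul_mem_left _ _ (Ideal.span_mono ?_ (ih hdisj m))) <;>
      exact Set.image_mono (Set.Icc_subset_Icc (by omega) (by omega))

theorem hsymmOn_mem_span_hsymmOn_of_subset {s t : Finset σ} (hst : s ⊆ t) (m : ℕ) :
    hsymmOn R s m ∈ Ideal.span (hsymmOn R t '' Set.Icc (m - #(t \ s)) m) := by
  have h := hsymmOn_mem_span_hsymmOn_union (R := R) (disjoint_sdiff (s := s) (t := t)) m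
  rwa [union_sdiff_of_subset hst] at h

end Span

section Lex

variable {σ R : Type*} [LinearOrder σ] [WellFoundedGT σ] [LocallyFiniteOrderTop σ]
  [CommSemiring R] [Nontrivial R]

theorem lex_degree_hsymmOn_Ici (i : σ) (c : ℕ) :
    MonomialOrder.lex.degree (hsymmOn R (Ici i) c) = Finsupp.single i c := by
  apply MonomialOrder.lex.toSyn.injective
  apply le_antisymm
  · refine MonomialOrder.degree_le_iff.2 fun t ht => ?_
    rw [mem_support_iff, coeff_hsymmOn, ne_eq, ite_eq_right_iff, Classical.not_imp] at ht
    obtain ⟨⟨rfl, hsupp⟩, -⟩ := ht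
    exact Finsupp.toLex_le_toLex_single_degree fun j hj =>
      Finsupp.notMem_support_iff.1 fun hj' => (mem_Ici.1 (hsupp hj')).not_gt hj
  · refine MonomialOrder.le_degree ?_
    rw [mem_support_iff, coeff_single_hsymmOn (mem_Ici.2 le_rfl)]
    exact one_ne_zero

theorem lex_leadingCoeff_hsymmOn_Ici (i : σ) (c : ℕ) :
    MonomialOrder.lex.leadingCoeff (hsymmOn R (Ici i) c) = 1 := by
  rw [MonomialOrder.leadingCoeff, lex_degree_hsymmOn_Ici, coeff_single_hsymmOn (mem_Ici.2 le_rfl)]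

end Lex

attribute [local instance] gradedAlgebra in
theorem IsHomogeneous.mem_span_of_forall_exists_degree_le {σ R : Type*} [CommRing R]
    (m : MonomialOrder σ) {S : Set (MvPolynomial σ R)} (hS : ∀ s ∈ S, ∃ i, s.IsHomogeneous i)
    {B : Set (MvPolynomial σ R)} (hBS : B ⊆ Ideal.span S)
    (hB : ∀ b ∈ B, IsUnit (m.leadingCoeff b)) {d : ℕ}
    (hd : ∀ c : σ →₀ ℕ, c.degree = d → ∃ b ∈ B, m.degree b ≤ c)
    {p : MvPolynomial σ R} (hp : p.IsHomogeneous d) : p ∈ Ideal.span S := by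
  obtain ⟨g, r, hpr, -, hr⟩ := m.div_set hB p
  have hcomb : p - r ∈ Ideal.span S := by
    rw [hpr, add_sub_cancel_right]
    exact Ideal.span_le.2 hBS ((Finsupp.mem_span_iff_linearCombination _ _ _).2 ⟨g, rfl⟩)
  have hr_d : homogeneousComponent d r = 0 :=
    homogeneousComponent_eq_zero' _ _ fun c hc hcd =>
      let ⟨b, hb, hbc⟩ := hd c hcd
      hr c hc b hb hbc
  have := homogeneousComponent_mem_of_mem (Ideal.homogeneous_span _ S hS) hcomb d
  rwa [map_sub, hr_d, sub_zero, homogeneousComponent_of_mem hp, if_pos rfl] at this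

end MvPolynomial

theorem top_degree_vanishing_general (n ℓ : ℕ) (hn : ℓ ≤ n)
    (d : ℕ) (hd : ℓ * n - ℓ * (ℓ + 1) / 2 < d)
    (p : MvPolynomial (Fin ℓ) (ZMod 2)) (hp : p.IsHomogeneous d) :
    Ideal.Quotient.mk
      (Ideal.span ((fun j => hsymm (Fin ℓ) (ZMod 2) j) '' (Set.Icc (n - ℓ + 1) n)))
      p = 0 := by
  have hgen : (fun j => hsymm (Fin ℓ) (ZMod 2) j) = hsymmOn (ZMod 2) univ :=
    funext fun j => (hsymmOn_univ j).symm
  rw [Ideal.Quotient.eq_zero_iff_mem, hgen]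
  refine hp.mem_span_of_forall_exists_degree_le MonomialOrder.lex
    (by rintro _ ⟨j, -, rfl⟩; exact ⟨j, isHomogeneous_hsymmOn _ _⟩)
    (B := Set.range fun k : Fin ℓ => hsymmOn (ZMod 2) (Ici k) (n - ℓ + 1 + k)) ?_
    (by rintro _ ⟨k, rfl⟩; simp [lex_leadingCoeff_hsymmOn_Ici]) fun c hc => ?_
  · rintro _ ⟨k, rfl⟩
    have hcard : #(univ \ Ici k) = k := by
      rw [card_univ_sdiff, Fintype.card_fin, Fin.card_Ici]
      omega
    exact Ideal.span_mono (Set.image_mono (Set.Icc_subset_Icc (by omega) (by omega)))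
      (hsymmOn_mem_span_hsymmOn_of_subset (subset_univ (Ici k)) (n - ℓ + 1 + k))
  · obtain ⟨k, -, hk⟩ : ∃ k ∈ univ, n - ℓ + k < c k := by
      refine exists_lt_of_sum_lt ?_
      rwa [← Finsupp.degree_eq_sum, hc, Fin.sum_univ_eq_sum_range (fun k => n - ℓ + k),
        sum_range_sub_add n ℓ hn]
    exact ⟨_, ⟨k, rfl⟩, by rw [lex_degree_hsymmOn_Ici, Finsupp.single_le_iff]; omega⟩

/-- In `𝔽₂[x₁,…,x_ℓ]/(f_{n−ℓ+1},…,f_n)`, every homogeneous element of degree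
strictly greater than `ℓn − ℓ(ℓ+1)/2` is zero. -/
theorem top_degree_vanishing (n ℓ : ℕ) (hℓ : 1 ≤ ℓ) (hn : ℓ ≤ n)
    (d : ℕ) (hd : ℓ * n - ℓ * (ℓ + 1) / 2 < d)
    (p : MvPolynomial (Fin ℓ) (ZMod 2)) (hp : p.IsHomogeneous d) :
    Ideal.Quotient.mk
      (Ideal.span ((fun j => hsymm (Fin ℓ) (ZMod 2) j) '' (Set.Icc (n - ℓ + 1) n)))
      p = 0 :=
  top_degree_vanishing_general n ℓ hn d hd p hp
end
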